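/- arXiv:0905.2997 — 2 statements merged into one kernel-verified Lean document; each statement's English description precedes it below -/
import Mathlib

section
/- Let S ⊆ H with |S| > 1 and h_0 ∈ S with π_S(h_0) > 1/2, and let R = S \ {h_0}. If questions q_j and q_i satisfy Δ_j(S, π_S)/c_j ≥ Δ_i(S, π_S)/c_i, then 2·δ_j/c_j ≥ δ_i/c_i. -/
open Finset

namespace ActiveLearning

variable {H A : Type*} {m : ℕ}

/-- The total mass of a weight function `v` on a finite set `S`. -/
def mass (v : H → ℝ) (S : Finset H) : ℝ := ∑ s ∈ S, v s

/-- `v` restricted to `S` and normalized. -/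
noncomputable def restrict [DecidableEq H] (v : H → ℝ) (S : Finset H) : H → ℝ :=
  fun h => if h ∈ S then v h / mass v S else 0

/-- The shrinkage `Δ` of a question `qi` on `(S, v)`. -/
noncomputable def shrink [Fintype A] [DecidableEq A] (qi : H → A)
    (S : Finset H) (v : H → ℝ) : ℝ :=
  mass v S - ∑ j : A, (mass v (S.filter fun s => qi s = j)) ^ 2 / mass v S

/-- The collision probability of a distribution `v`. -/
def CP [Fintype H] (v : H → ℝ) : ℝ := ∑ z : H, (v z) ^ 2

/-- Query trees: internal nodes are questions (indexed by `Fin m`), branches are answers,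
leaves are hypotheses. -/
inductive QTree (m : ℕ) (H A : Type*) : Type _
  | leaf : H → QTree m H A
  | node : Fin m → (A → QTree m H A) → QTree m H A

/-- Follow the answers of hypothesis `h` down the tree, returning the leaf reached. -/
def follow (q : Fin m → H → A) : QTree m H A → H → H
  | .leaf h', _ => h'
  | .node i ch, h => follow q (ch (q i h)) h

/-- The cost `c_T(h)`: sum of costs of the questions on the root-to-`h` path. -/
def pathCost (q : Fin m → H → A) (c : Fin m → ℝ) : QTree m H A → H → ℝ
  | .leaf _, _ => 0
  | .node i ch, h => c i + pathCost q c (ch (q i h)) h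

/-- The leaves of `T` include `S`: every `h ∈ S` is identified by `T`. -/
def ValidOn (q : Fin m → H → A) (T : QTree m H A) (S : Finset H) : Prop :=
  ∀ h ∈ S, follow q T h = h

/-- The expected cost `C(T, v)` of a query tree `T` under weights `v`. -/
noncomputable def treeCost [Fintype H] (q : Fin m → H → A) (c : Fin m → ℝ)
    (T : QTree m H A) (v : H → ℝ) : ℝ :=
  ∑ h : H, v h * pathCost q c T h

/-- The questions asked along the root-to-`h` path. -/
def pathQs (q : Fin m → H → A) : QTree m H A → H → List (Fin m)
  | .leaf _, _ => []
  | .node i ch, h => i :: pathQs q (ch (q i h)) h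

/-- `T` is a greedy query tree for `π` on version space `S`: at every node it asks a question
maximizing the shrinkage-cost ratio and recurses on each nonempty answer class. -/
inductive IsGreedy [Fintype A] [DecidableEq A] [DecidableEq H]
    (q : Fin m → H → A) (c : Fin m → ℝ) (π : H → ℝ) :
    QTree m H A → Finset H → Prop
  | leaf (h : H) : IsGreedy q c π (.leaf h) {h}
  | node (S : Finset H) (i : Fin m) (ch : A → QTree m H A)
      (hcard : 1 < S.card)
      (hmax : ∀ j : Fin m,
        shrink (q j) S (restrict π S) / c j ≤ shrink (q i) S (restrict π S) / c i)
      (hch : ∀ a : A, (S.filter fun s => q i s = a).Nonempty →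
        IsGreedy q c π (ch a) (S.filter fun s => q i s = a)) :
      IsGreedy q c π (.node i ch) S

/-- `T` is an `ε`-approximate greedy query tree for `π` on version space `S`. -/
inductive IsApproxGreedy [Fintype A] [DecidableEq A] [DecidableEq H]
    (ε : ℝ) (q : Fin m → H → A) (c : Fin m → ℝ) (π : H → ℝ) :
    QTree m H A → Finset H → Prop
  | leaf (h : H) : IsApproxGreedy ε q c π (.leaf h) {h}
  | node (S : Finset H) (i : Fin m) (ch : A → QTree m H A)
      (hcard : 1 < S.card)
      (happrox : ∀ j : Fin m,
        (1 - ε) * (shrink (q j) S (restrict π S) / c j) ≤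
          shrink (q i) S (restrict π S) / c i)
      (hch : ∀ a : A, (S.filter fun s => q i s = a).Nonempty →
        IsApproxGreedy ε q c π (ch a) (S.filter fun s => q i s = a)) :
      IsApproxGreedy ε q c π (.node i ch) S

/-- `T` is irreducible on version space `S`: every asked question strictly splits the
surviving set. -/
inductive Irreducible [DecidableEq A] (q : Fin m → H → A) :
    QTree m H A → Finset H → Prop
  | leaf (h : H) (S : Finset H) : Irreducible q (.leaf h) S
  | node (S : Finset H) (i : Fin m) (ch : A → QTree m H A)
      (hsplit : ∃ s ∈ S, ∃ t ∈ S, q i s ≠ q i t)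
      (hch : ∀ a : A, (S.filter fun s => q i s = a).Nonempty →
        Irreducible q (ch a) (S.filter fun s => q i s = a)) :
      Irreducible q (.node i ch) S

/-!
Write `M = π(S)`, `m` for the mass of the answer class of `h₀` and `d = M - m` for the mass
of the hypotheses disagreeing with `h₀`. The squared class masses sum to at least `m²` and,
since the classes other than that of `h₀` have total mass `d`, to at most `m² + d²`. Hence
`Δ · M` lies between `2md` and `M² - m² = d (M + m)`, and once `m ≥ M / 2` this gives
`d ≤ Δ ≤ 2d`. Finally `δ` is `d / M` rescaled by the factor `π(S) / π(R)`, which is common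
to both questions.
-/

section Mass

variable {v : H → ℝ} {S : Finset H}

lemma mass_pos (hv : ∀ h, 0 < v h) (hS : S.Nonempty) : 0 < mass v S :=
  sum_pos (fun h _ => hv h) hS

lemma mass_nonneg (hv : ∀ s ∈ S, 0 ≤ v s) {T : Finset H} (hT : T ⊆ S) : 0 ≤ mass v T :=
  sum_nonneg fun t ht => hv t (hT ht)

lemma mass_filter_eq_add_mass_filter_ne [DecidableEq A] (f : H → A) (a : A) :
    mass v (S.filter fun s => f s = a) + mass v (S.filter fun s => f s ≠ a) = mass v S :=
  sum_filter_add_sum_filter_not S _ v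

lemma sum_mass_fiber [Fintype A] [DecidableEq A] (f : H → A) :
    ∑ j : A, mass v (S.filter fun s => f s = j) = mass v S :=
  sum_fiberwise S f v

lemma mass_le_two_mul_mass_filter_eq [DecidableEq A] (hv : ∀ s ∈ S, 0 ≤ v s) (f : H → A)
    {h0 : H} (h0S : h0 ∈ S) (hh0 : mass v S < 2 * v h0) :
    mass v S ≤ 2 * mass v (S.filter fun s => f s = f h0) := by
  have : v h0 ≤ mass v (S.filter fun s => f s = f h0) :=
    single_le_sum (f := v) (fun s hs => hv s (filter_subset _ S hs)) (mem_filter.2 ⟨h0S, rfl⟩)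
  linarith

variable [DecidableEq H]

lemma restrict_nonneg (hv : ∀ s ∈ S, 0 ≤ v s) (h : H) : 0 ≤ restrict v S h := by
  unfold restrict
  split_ifs with hh
  · exact div_nonneg (hv h hh) (mass_nonneg hv subset_rfl)
  · rfl

lemma mass_restrict_of_subset {T : Finset H} (hT : T ⊆ S) :
    mass (restrict v S) T = mass v T / mass v S := by
  rw [mass, mass, sum_div]
  exact sum_congr rfl fun t ht => if_pos (hT ht)

lemma mass_restrict_self (hS : mass v S ≠ 0) : mass (restrict v S) S = 1 := by
  rw [mass_restrict_of_subset subset_rfl, div_self hS]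

lemma mass_restrict_eq_mass_restrict_mul {R T : Finset H} (hTR : T ⊆ R) (hRS : R ⊆ S)
    (hS : mass v S ≠ 0) :
    mass (restrict v R) T = mass (restrict v S) T * (mass v S / mass v R) := by
  rw [mass_restrict_of_subset hTR, mass_restrict_of_subset (hTR.trans hRS),
    div_mul_div_cancel₀ hS]

lemma mass_restrict_erase_filter_ne [DecidableEq A] (hS : mass v S ≠ 0) (f : H → A) (h0 : H) :
    mass (restrict v (S.erase h0)) ((S.erase h0).filter fun r => f r ≠ f h0) =
      mass (restrict v S) (S.filter fun s => f s ≠ f h0) * (mass v S / mass v (S.erase h0)) := by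
  have hfilt : ((S.erase h0).filter fun r => f r ≠ f h0) = S.filter fun s => f s ≠ f h0 := by
    rw [filter_erase]
    exact erase_eq_of_notMem (by simp)
  rw [mass_restrict_eq_mass_restrict_mul (filter_subset _ _) (erase_subset _ _) hS, hfilt]

end Mass

section Shrink

variable [Fintype A] [DecidableEq A] {v : H → ℝ} {S : Finset H} (f : H → A) (a : A)

lemma shrink_eq_div (hS : mass v S ≠ 0) :
    shrink f S v =
      (mass v S ^ 2 - ∑ j : A, mass v (S.filter fun s => f s = j) ^ 2) / mass v S := by
  rw [shrink, ← sum_div, sub_div, sq, mul_self_div_self]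

lemma sq_mass_fiber_le_sum_sq :
    mass v (S.filter fun s => f s = a) ^ 2 ≤ ∑ j : A, mass v (S.filter fun s => f s = j) ^ 2 :=
  single_le_sum (f := fun j => mass v (S.filter fun s => f s = j) ^ 2)
    (fun j _ => sq_nonneg _) (mem_univ a)

lemma sum_sq_mass_fiber_le (hv : ∀ s ∈ S, 0 ≤ v s) :
    ∑ j : A, mass v (S.filter fun s => f s = j) ^ 2 ≤
      mass v (S.filter fun s => f s = a) ^ 2 + mass v (S.filter fun s => f s ≠ a) ^ 2 := by
  set μ : A → ℝ := fun j => mass v (S.filter fun s => f s = j)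
  have hrest : ∑ j ∈ univ.erase a, μ j = mass v (S.filter fun s => f s ≠ a) := by
    have := add_sum_erase univ μ (mem_univ a)
    have := mass_filter_eq_add_mass_filter_ne (v := v) (S := S) f a
    linarith [sum_mass_fiber (v := v) (S := S) f]
  have hrest_sq : ∑ j ∈ univ.erase a, μ j ^ 2 ≤ (∑ j ∈ univ.erase a, μ j) ^ 2 :=
    sum_sq_le_sq_sum_of_nonneg fun j _ => mass_nonneg hv (filter_subset _ _)
  rw [← add_sum_erase univ (fun j => μ j ^ 2) (mem_univ a), ← hrest]
  exact add_le_add_right hrest_sq _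

lemma shrink_le_two_mul_mass_filter_ne (hS : 0 < mass v S) :
    shrink f S v ≤ 2 * mass v (S.filter fun s => f s ≠ a) := by
  have hsplit := mass_filter_eq_add_mass_filter_ne (v := v) (S := S) f a
  rw [shrink_eq_div f hS.ne', div_le_iff₀ hS, ← hsplit]
  nlinarith [sq_mass_fiber_le_sum_sq (v := v) (S := S) f a,
    sq_nonneg (mass v (S.filter fun s => f s ≠ a))]

lemma mass_filter_ne_le_shrink (hv : ∀ s ∈ S, 0 ≤ v s) (hS : 0 < mass v S)
    (hmaj : mass v S ≤ 2 * mass v (S.filter fun s => f s = a)) :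
    mass v (S.filter fun s => f s ≠ a) ≤ shrink f S v := by
  have hsplit := mass_filter_eq_add_mass_filter_ne (v := v) (S := S) f a
  have hd : 0 ≤ mass v (S.filter fun s => f s ≠ a) := mass_nonneg hv (filter_subset _ _)
  rw [shrink_eq_div f hS.ne', le_div_iff₀ hS, ← hsplit]
  rw [← hsplit] at hmaj
  nlinarith [sum_sq_mass_fiber_le f a hv]

lemma mass_filter_ne_div_le_of_shrink_div_le (hv : ∀ s ∈ S, 0 ≤ v s) (hS : 0 < mass v S)
    {g : H → A} {b : A} {c c' : ℝ}
    (hmaj : mass v S ≤ 2 * mass v (S.filter fun s => f s = a)) (hc : 0 < c) (hc' : 0 < c')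
    (h : shrink f S v / c ≤ shrink g S v / c') :
    mass v (S.filter fun s => f s ≠ a) / c ≤ 2 * (mass v (S.filter fun s => g s ≠ b) / c') :=
  calc _ ≤ shrink f S v / c := by gcongr; exact mass_filter_ne_le_shrink f a hv hS hmaj
    _ ≤ shrink g S v / c' := h
    _ ≤ 2 * mass v (S.filter fun s => g s ≠ b) / c' := by
        gcongr; exact shrink_le_two_mul_mass_filter_ne g b hS
    _ = _ := mul_div_assoc _ _ _

end Shrink

theorem delta_ratio_comparison_general [Fintype A] [DecidableEq H] [DecidableEq A]
    (π : H → ℝ) (hπpos : ∀ h, 0 < π h)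
    (q : Fin m → H → A) (c : Fin m → ℝ) (hc : ∀ i, 0 < c i)
    (S : Finset H)
    (h0 : H) (h0S : h0 ∈ S) (hh0 : 1 / 2 < restrict π S h0)
    (j i : Fin m)
    (hji : shrink (q i) S (restrict π S) / c i ≤ shrink (q j) S (restrict π S) / c j) :
    mass (restrict π (S.erase h0)) ((S.erase h0).filter fun r => q i r ≠ q i h0) / c i ≤
      2 * (mass (restrict π (S.erase h0))
        ((S.erase h0).filter fun r => q j r ≠ q j h0) / c j) := by
  have hπ : ∀ s ∈ S, 0 ≤ π s := fun s _ => (hπpos s).le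
  have hPS : mass π S ≠ 0 := (mass_pos hπpos ⟨h0, h0S⟩).ne'
  have hv : ∀ s ∈ S, 0 ≤ restrict π S s := fun s _ => restrict_nonneg hπ s
  have hM : mass (restrict π S) S = 1 := mass_restrict_self hPS
  have hmaj := mass_le_two_mul_mass_filter_eq hv (q i) h0S (by linarith)
  have hscale : 0 ≤ mass π S / mass π (S.erase h0) :=
    div_nonneg (mass_nonneg hπ subset_rfl) (mass_nonneg hπ (erase_subset _ _))
  rw [mass_restrict_erase_filter_ne hPS, mass_restrict_erase_filter_ne hPS,
    mul_div_right_comm, mul_div_right_comm, ← mul_assoc]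
  exact mul_le_mul_of_nonneg_right
    (mass_filter_ne_div_le_of_shrink_div_le _ _ hv (hM ▸ one_pos) hmaj (hc i) (hc j) hji) hscale

/-- If `h_0 ∈ S` has `π_S(h_0) > 1/2`, `R = S \ {h_0}`, and questions
`q_j, q_i` satisfy `Δ_j(S, π_S)/c_j ≥ Δ_i(S, π_S)/c_i`, then `2·δ_j/c_j ≥ δ_i/c_i`. -/
theorem delta_ratio_comparison [Fintype H] [Fintype A] [DecidableEq H] [DecidableEq A]
    (π : H → ℝ) (hπpos : ∀ h, 0 < π h) (hπsum : ∑ h : H, π h = 1)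
    (hH : 1 < Fintype.card H)
    (q : Fin m → H → A) (c : Fin m → ℝ) (hc : ∀ i, 0 < c i)
    (S : Finset H) (hS : 1 < S.card)
    (h0 : H) (h0S : h0 ∈ S) (hh0 : 1 / 2 < restrict π S h0)
    (j i : Fin m)
    (hji : shrink (q i) S (restrict π S) / c i ≤ shrink (q j) S (restrict π S) / c j) :
    mass (restrict π (S.erase h0)) ((S.erase h0).filter fun r => q i r ≠ q i h0) / c i ≤
      2 * (mass (restrict π (S.erase h0))
        ((S.erase h0).filter fun r => q j r ≠ q j h0) / c j) :=
  delta_ratio_comparison_general π hπpos q c hc S h0 h0S hh0 j i hji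

end ActiveLearning
end

section
/- The greedy query tree T^g for π has cost at most C(T^g, π) ≤ 12 · C* · ln( 1 / min_{h∈H} π(h) ), where C* = min_T C(T, π) is the minimum cost over all query trees T whose leaves are H. In particular the approximation factor is independent of the question costs c_i. -/
open Finset

namespace ActiveLearning

variable {H A : Type*} {m : ℕ}

/-!
Let `g(S) = π(S) Δᵢ(S, π) / ∑_{s ≠ t ∈ S} π s π t` be the fraction of the pair mass of `S` that the
greedy question `qᵢ` separates. Any tree `T` identifying `S` must separate all of that pair mass,
and a question `qⱼ` asked at a node `V ⊆ S` separates at most `π(V) Δⱼ(S, π)` of it; by greedy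
maximality this gives `cᵢ π(S) ≤ C_S(T) g(S)`, where `C_S` is the cost restricted to `S`.
On the other hand `g(S) ≤ 2` and `g(S) ≤ 2 (π(S) - π(Sʲ)) / (π(S) - max_S π)` for every answer `j`,
which is exactly what makes the potential
`Φ(S) = 4 ln(π(S)/μ) + 2 ln((π(S) - max_S π)/μ)` (with `μ = min π`, and `Φ = 0` on singletons)
drop by at least `g(S)` on every child. Induction on the greedy tree gives
`C_S(Tᵍ) ≤ C_S(T) Φ(S)`, and `Φ(H) ≤ 6 ln(1/μ)`.
-/

section mass

variable {π : H → ℝ}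

lemma mass_nonneg_s10 (hπ : ∀ h, 0 ≤ π h) (S : Finset H) : 0 ≤ mass π S :=
  sum_nonneg fun h _ => hπ h

lemma mass_mono (hπ : ∀ h, 0 ≤ π h) {S T : Finset H} (hST : S ⊆ T) :
    mass π S ≤ mass π T :=
  sum_le_sum_of_subset_of_nonneg hST fun h _ _ => hπ h

lemma single_le_mass (hπ : ∀ h, 0 ≤ π h) {S : Finset H} {h : H} (hh : h ∈ S) :
    π h ≤ mass π S :=
  single_le_sum (fun h _ => hπ h) hh

lemma mass_erase [DecidableEq H] {S : Finset H} {z : H} (hz : z ∈ S) :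
    mass π (S.erase z) = mass π S - π z :=
  sum_erase_eq_sub hz

lemma mass_insert [DecidableEq H] {S : Finset H} {x : H} (hx : x ∉ S) :
    mass π (insert x S) = π x + mass π S :=
  sum_insert hx

lemma sum_sum_filter_eq_sum [Fintype A] [DecidableEq A] (qi : H → A) (S : Finset H)
    (F : A → H → ℝ) :
    ∑ j : A, ∑ h ∈ S.filter (fun s => qi s = j), F j h = ∑ h ∈ S, F (qi h) h := by
  rw [← sum_fiberwise S qi fun h => F (qi h) h]
  exact sum_congr rfl fun j _ => sum_congr rfl fun h hh => by rw [(mem_filter.1 hh).2]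

lemma sum_mass_filter [Fintype A] [DecidableEq A] (qi : H → A) (S : Finset H) :
    ∑ j : A, mass π (S.filter fun s => qi s = j) = mass π S :=
  sum_fiberwise S qi π

lemma mass_restrict [DecidableEq H] {S U : Finset H} (hU : U ⊆ S) :
    mass (restrict π S) U = mass π U / mass π S := by
  rw [mass, mass, sum_div]
  exact sum_congr rfl fun h hh => by rw [restrict, if_pos (hU hh)]

end mass

section shrinkage

variable [Fintype A] [DecidableEq A] {π : H → ℝ} (qi : H → A)

noncomputable def sumSqMass (π : H → ℝ) (S : Finset H) : ℝ :=
  ∑ j : A, mass π (S.filter fun s => qi s = j) ^ 2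

/-- The total weight `∑_{s ≠ t} π s π t` of ordered pairs of distinct elements of `V`. -/
noncomputable def pairMass (π : H → ℝ) (V : Finset H) : ℝ :=
  mass π V ^ 2 - ∑ h ∈ V, π h ^ 2

lemma sumSqMass_le_sq (hπ : ∀ h, 0 ≤ π h) (S : Finset H) :
    sumSqMass qi π S ≤ mass π S ^ 2 := by
  rw [sumSqMass, ← sum_mass_filter qi S]
  exact sum_sq_le_sq_sum_of_nonneg fun j _ => mass_nonneg_s10 hπ _

lemma sq_mass_filter_le_sumSqMass (S : Finset H) (j : A) :
    mass π (S.filter fun s => qi s = j) ^ 2 ≤ sumSqMass qi π S :=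
  single_le_sum (f := fun j => mass π (S.filter fun s => qi s = j) ^ 2)
    (fun _ _ => sq_nonneg _) (mem_univ j)

lemma shrink_eq_mass_sub_sumSqMass (S : Finset H) :
    shrink qi S π = mass π S - sumSqMass qi π S / mass π S := by
  rw [shrink, sumSqMass, sum_div]

lemma mass_mul_shrink (hπ : ∀ h, 0 ≤ π h) (S : Finset H) :
    mass π S * shrink qi S π = mass π S ^ 2 - sumSqMass qi π S := by
  rcases (mass_nonneg_s10 hπ S).eq_or_lt with hw | hw
  · have := sumSqMass_le_sq qi hπ S
    have : 0 ≤ sumSqMass qi π S := sum_nonneg fun _ _ => sq_nonneg _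
    rw [← hw] at *
    nlinarith
  · rw [shrink_eq_mass_sub_sumSqMass, mul_sub, mul_div_cancel₀ _ hw.ne', sq]

lemma shrink_nonneg (hπ : ∀ h, 0 ≤ π h) (S : Finset H) : 0 ≤ shrink qi S π := by
  rcases (mass_nonneg_s10 hπ S).eq_or_lt with hw | hw
  · rw [shrink_eq_mass_sub_sumSqMass, ← hw, div_zero, sub_zero]
  · have := mass_mul_shrink qi hπ S
    have := sumSqMass_le_sq qi hπ S
    nlinarith

lemma shrink_restrict [DecidableEq H] (S : Finset H) :
    shrink qi S (restrict π S) = shrink qi S π / mass π S := by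
  have hmass : ∀ j, mass (restrict π S) (S.filter fun s => qi s = j) =
      mass π (S.filter fun s => qi s = j) / mass π S :=
    fun j => mass_restrict (filter_subset _ _)
  rcases eq_or_ne (mass π S) 0 with hw | hw
  · simp [shrink, hmass, mass_restrict subset_rfl, hw]
  · simp only [shrink, hmass, mass_restrict subset_rfl, div_self hw, div_pow, div_one]
    rw [← sum_div, ← sum_div]
    field_simp

lemma sumSqMass_insert [DecidableEq H] {S : Finset H} {x : H} (hx : x ∉ S) :
    sumSqMass qi π (insert x S) = sumSqMass qi π S +
      (2 * π x * mass π (S.filter fun s => qi s = qi x) + π x ^ 2) := by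
  have hfilter : ∀ j, mass π ((insert x S).filter fun s => qi s = j) ^ 2 =
      mass π (S.filter fun s => qi s = j) ^ 2 + if qi x = j then
        2 * π x * mass π (S.filter fun s => qi s = qi x) + π x ^ 2 else 0 := by
    intro j
    by_cases hj : qi x = j
    · subst hj
      rw [filter_insert, if_pos rfl, if_pos rfl, mass_insert (by simp [hx])]
      ring
    · rw [filter_insert, if_neg hj, if_neg hj, add_zero]
  rw [sumSqMass, sumSqMass, sum_congr rfl fun j _ => hfilter j, sum_add_distrib,
    sum_ite_eq univ (qi x), if_pos (mem_univ _)]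

/-- Inserting `x` into an answer class of mass `wa` raises `π(S) Δ = π(S)² - ∑ⱼ π(Sʲ)²` by
`2 π x (π(S) - wa)`, which is at least the `π x · Δ` needed to keep `Δ` from dropping. -/
lemma shrink_le_shrink_insert [DecidableEq H] (hπ : ∀ h, 0 ≤ π h) {S : Finset H} {x : H}
    (hx : x ∉ S) : shrink qi S π ≤ shrink qi (insert x S) π := by
  rcases (mass_nonneg_s10 hπ S).eq_or_lt with hw | hw
  · rw [shrink_eq_mass_sub_sumSqMass qi S, ← hw, div_zero, sub_zero]
    exact shrink_nonneg qi hπ _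
  set wa := mass π (S.filter fun s => qi s = qi x)
  have hwa : wa ≤ mass π S := mass_mono hπ (filter_subset _ _)
  have hwa0 : 0 ≤ wa := mass_nonneg_s10 hπ _
  have hBa : wa ^ 2 ≤ sumSqMass qi π S := sq_mass_filter_le_sumSqMass qi S (qi x)
  have hB : sumSqMass qi π S ≤ mass π S ^ 2 := sumSqMass_le_sq qi hπ S
  have hpw : 0 < π x + mass π S := by linarith [hπ x]
  have hS := mass_mul_shrink qi hπ S
  have hxS := mass_mul_shrink qi hπ (insert x S)
  rw [mass_insert hx, sumSqMass_insert qi hx] at hxS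
  have hgrow : mass π S * shrink qi S π ≤ 2 * mass π S * (mass π S - wa) := by nlinarith
  have : (π x + mass π S) * shrink qi S π ≤ (π x + mass π S) * shrink qi (insert x S) π := by
    nlinarith [mul_le_mul_of_nonneg_left hgrow (hπ x)]
  exact le_of_mul_le_mul_left this hpw

lemma shrink_mono [DecidableEq H] (hπ : ∀ h, 0 ≤ π h) {V S : Finset H} (hVS : V ⊆ S) :
    shrink qi V π ≤ shrink qi S π := by
  rw [← union_sdiff_of_subset hVS]
  induction S \ V using Finset.induction_on with
  | empty => rw [union_empty]
  | insert x W _ ih =>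
    rw [union_insert]
    by_cases hx : x ∈ V ∪ W
    · rwa [insert_eq_of_mem hx]
    · exact ih.trans (shrink_le_shrink_insert qi hπ hx)

lemma pairMass_eq_add_sum_pairMass_filter (hπ : ∀ h, 0 ≤ π h) (V : Finset H) :
    pairMass π V = mass π V * shrink qi V π +
      ∑ j : A, pairMass π (V.filter fun s => qi s = j) := by
  simp only [pairMass]
  rw [mass_mul_shrink qi hπ, sum_sub_distrib,
    sum_sum_filter_eq_sum qi V fun _ h => π h ^ 2, sumSqMass]
  ring

lemma sq_mass_sub_sumSqMass_le (hπ : ∀ h, 0 ≤ π h) (S : Finset H) (j : A) :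
    mass π S ^ 2 - sumSqMass qi π S ≤
      2 * mass π S * (mass π S - mass π (S.filter fun s => qi s = j)) := by
  have := sq_mass_filter_le_sumSqMass (π := π) qi S j
  have := mass_mono hπ (filter_subset (fun s => qi s = j) S)
  have := mass_nonneg_s10 hπ (S.filter fun s => qi s = j)
  nlinarith

end shrinkage

section heaviest

variable {π : H → ℝ}

noncomputable def maxWeight (π : H → ℝ) (S : Finset H) : ℝ :=
  if hS : S.Nonempty then S.sup' hS π else 0

noncomputable def lightMass (π : H → ℝ) (S : Finset H) : ℝ :=
  mass π S - maxWeight π S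

lemma maxWeight_eq {S : Finset H} {z : H} (hz : z ∈ S) (hmax : ∀ h ∈ S, π h ≤ π z) :
    maxWeight π S = π z := by
  rw [maxWeight, dif_pos ⟨z, hz⟩]
  exact le_antisymm (sup'_le _ _ hmax) (le_sup' π hz)

lemma maxWeight_nonneg (hπ : ∀ h, 0 ≤ π h) (S : Finset H) : 0 ≤ maxWeight π S := by
  rcases S.eq_empty_or_nonempty with rfl | hS
  · simp [maxWeight]
  · obtain ⟨z, hz, hmax⟩ := exists_max_image S π hS
    exact maxWeight_eq hz hmax ▸ hπ z

lemma lightMass_le_mass (hπ : ∀ h, 0 ≤ π h) (S : Finset H) : lightMass π S ≤ mass π S :=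
  sub_le_self _ (maxWeight_nonneg hπ S)

lemma lightMass_eq_mass_erase [DecidableEq H] {S : Finset H} {z : H} (hz : z ∈ S)
    (hmax : ∀ h ∈ S, π h ≤ π z) : lightMass π S = mass π (S.erase z) := by
  rw [lightMass, maxWeight_eq hz hmax, mass_erase hz]

lemma le_lightMass {μ : ℝ} (hπ : ∀ h, 0 ≤ π h) (hμ : ∀ h, μ ≤ π h) {S : Finset H}
    (hS : 1 < S.card) : μ ≤ lightMass π S := by
  classical
  obtain ⟨z, hz, hmax⟩ := exists_max_image S π (card_pos.1 (by omega))
  obtain ⟨y, hy⟩ : (S.erase z).Nonempty := by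
    rw [← card_pos, card_erase_of_mem hz]
    omega
  rw [lightMass_eq_mass_erase hz hmax]
  exact (hμ y).trans (single_le_mass hπ hy)

lemma mass_mul_lightMass_le_pairMass (hπ : ∀ h, 0 ≤ π h) (S : Finset H) :
    mass π S * lightMass π S ≤ pairMass π S := by
  rcases S.eq_empty_or_nonempty with rfl | hS
  · simp [mass, lightMass, pairMass, maxWeight]
  obtain ⟨z, hz, hmax⟩ := exists_max_image S π hS
  have hsq : ∑ h ∈ S, π h ^ 2 ≤ π z * mass π S := by
    rw [mass, mul_sum]
    exact sum_le_sum fun h hh => by nlinarith [hmax h hh, hπ h]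
  rw [lightMass, maxWeight_eq hz hmax, pairMass]
  nlinarith

end heaviest

section gain

variable [Fintype A] [DecidableEq A] {π : H → ℝ} (qi : H → A)

/-- The pair mass that `qi` separates at `S` is at most `2 π(S) (π(S) - π(Sʲ))` for every answer
`j`, while all of `pairMass π S` is at least `π(S) · lightMass π S`. -/
lemma gain_le (hπ : ∀ h, 0 ≤ π h) {S : Finset H} (hS : 0 < lightMass π S) (j : A) :
    mass π S * shrink qi S π / pairMass π S ≤
      2 * (mass π S - mass π (S.filter fun s => qi s = j)) / lightMass π S := by
  have hw : 0 < mass π S := hS.trans_le (lightMass_le_mass hπ S)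
  have hsep := sq_mass_sub_sumSqMass_le qi hπ S j
  rw [← mass_mul_shrink qi hπ] at hsep
  calc mass π S * shrink qi S π / pairMass π S
      ≤ 2 * mass π S * (mass π S - mass π (S.filter fun s => qi s = j)) /
          (mass π S * lightMass π S) :=
        div_le_div₀ (by nlinarith [mass_mul_shrink qi hπ S, shrink_nonneg qi hπ S]) hsep
          (by positivity) (mass_mul_lightMass_le_pairMass hπ S)
    _ = 2 * (mass π S - mass π (S.filter fun s => qi s = j)) / lightMass π S := by
        field_simp

lemma gain_le_two (hπ : ∀ h, 0 ≤ π h) {S : Finset H} (hS : 0 < lightMass π S) :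
    mass π S * shrink qi S π / pairMass π S ≤ 2 := by
  have hw : 0 < mass π S := hS.trans_le (lightMass_le_mass hπ S)
  obtain ⟨z, hz, hmax⟩ := exists_max_image S π (nonempty_of_sum_ne_zero hw.ne')
  have hzj : π z ≤ mass π (S.filter fun s => qi s = qi z) :=
    single_le_mass hπ (mem_filter.2 ⟨hz, rfl⟩)
  have hlight : mass π S - mass π (S.filter fun s => qi s = qi z) ≤ lightMass π S := by
    rw [lightMass, maxWeight_eq hz hmax]
    linarith
  refine (gain_le qi hπ hS (qi z)).trans ?_
  rw [div_le_iff₀ hS]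
  linarith

end gain

section cost

variable {π : H → ℝ} {q : Fin m → H → A} {c : Fin m → ℝ}

noncomputable def costOn (q : Fin m → H → A) (c : Fin m → ℝ) (π : H → ℝ)
    (T : QTree m H A) (V : Finset H) : ℝ :=
  ∑ h ∈ V, π h * pathCost q c T h

lemma treeCost_eq_costOn [Fintype H] (T : QTree m H A) :
    treeCost q c T π = costOn q c π T univ :=
  rfl

lemma pathCost_nonneg (hc : ∀ i, 0 ≤ c i) (T : QTree m H A) (h : H) :
    0 ≤ pathCost q c T h := by
  induction T with
  | leaf => exact le_rfl
  | node i ch ih => exact add_nonneg (hc i) (ih _)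

lemma costOn_nonneg (hπ : ∀ h, 0 ≤ π h) (hc : ∀ i, 0 ≤ c i) (T : QTree m H A)
    (V : Finset H) : 0 ≤ costOn q c π T V :=
  sum_nonneg fun h _ => mul_nonneg (hπ h) (pathCost_nonneg hc T h)

lemma costOn_leaf (h' : H) (V : Finset H) : costOn q c π (.leaf h') V = 0 :=
  sum_eq_zero fun _ _ => mul_eq_zero_of_right _ rfl

lemma costOn_node [Fintype A] [DecidableEq A] (i : Fin m) (ch : A → QTree m H A)
    (V : Finset H) :
    costOn q c π (.node i ch) V =
      c i * mass π V + ∑ j : A, costOn q c π (ch j) (V.filter fun s => q i s = j) := by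
  simp only [costOn, pathCost, mul_add, sum_add_distrib, mass, mul_sum]
  rw [sum_sum_filter_eq_sum (q i) V fun j h => π h * pathCost q c (ch j) h]
  simp only [mul_comm]

lemma sum_costOn_filter [Fintype A] [DecidableEq A] (qi : H → A) (T : QTree m H A)
    (V : Finset H) : ∑ j : A, costOn q c π T (V.filter fun s => qi s = j) = costOn q c π T V :=
  sum_fiberwise V qi _

lemma ValidOn.mono {T : QTree m H A} {S V : Finset H} (hT : ValidOn q T S) (hVS : V ⊆ S) :
    ValidOn q T V :=
  fun h hh => hT h (hVS hh)

lemma ValidOn.child [DecidableEq A] {i : Fin m} {ch : A → QTree m H A} {V : Finset H}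
    (hT : ValidOn q (.node i ch) V) (j : A) : ValidOn q (ch j) (V.filter fun s => q i s = j) := by
  intro h hh
  obtain ⟨hV, rfl⟩ := mem_filter.1 hh
  exact hT h hV

lemma ValidOn.subset_singleton {h' : H} {V : Finset H} (hT : ValidOn q (.leaf h') V) :
    V ⊆ {h'} :=
  fun h hh => mem_singleton.2 (hT h hh).symm

/-- Lower bound on the cost of any valid tree: each question `q j` asked at a node with version
space `V ⊆ S` separates pair mass `π(V) Δ_j(V) ≤ π(V) Δ_j(S) ≤ ρ c_j π(V)`, and every pair of
distinct elements of `V` is separated somewhere. -/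
theorem pairMass_le_mul_costOn [Fintype A] [DecidableEq A] [DecidableEq H]
    (hπ : ∀ h, 0 ≤ π h) {S : Finset H} {ρ : ℝ} (hρ : ∀ j, shrink (q j) S π ≤ ρ * c j)
    (T : QTree m H A) {V : Finset H} (hVS : V ⊆ S) (hT : ValidOn q T V) :
    pairMass π V ≤ ρ * costOn q c π T V := by
  induction T generalizing V with
  | leaf h' =>
    rcases subset_singleton_iff.1 hT.subset_singleton with rfl | rfl <;>
      simp [pairMass, mass, costOn_leaf]
  | node i ch ih =>
    have hroot : mass π V * shrink (q i) V π ≤ ρ * (c i * mass π V) :=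
      calc mass π V * shrink (q i) V π ≤ mass π V * (ρ * c i) :=
            mul_le_mul_of_nonneg_left ((shrink_mono (q i) hπ hVS).trans (hρ i))
              (mass_nonneg_s10 hπ V)
        _ = ρ * (c i * mass π V) := by ring
    rw [pairMass_eq_add_sum_pairMass_filter (q i) hπ V, costOn_node, mul_add, mul_sum]
    exact add_le_add hroot
      (sum_le_sum fun j _ => ih j ((filter_subset _ _).trans hVS) (hT.child j))

/-- At a greedy node the root question is paid for by the comparison tree: greedy maximality
makes `ρ = Δ_i(S, π)/c_i` admissible in `pairMass_le_mul_costOn`. -/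
lemma cost_mul_mass_le_of_greedy [Fintype A] [DecidableEq A] [DecidableEq H]
    (hπ : ∀ h, 0 ≤ π h) (hc : ∀ i, 0 < c i) {S : Finset H} (hS : 0 < mass π S)
    (hpair : 0 < pairMass π S) {i : Fin m}
    (hmax : ∀ j, shrink (q j) S (restrict π S) / c j ≤ shrink (q i) S (restrict π S) / c i)
    (T : QTree m H A) (hT : ValidOn q T S) :
    c i * mass π S ≤ costOn q c π T S * (mass π S * shrink (q i) S π / pairMass π S) := by
  have hρ : ∀ j, shrink (q j) S π ≤ shrink (q i) S π / c i * c j := fun j => by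
    have := hmax j
    rw [shrink_restrict, shrink_restrict, div_right_comm, div_right_comm (shrink (q i) S π),
      div_le_div_iff_of_pos_right hS] at this
    rwa [← div_le_iff₀ (hc j)]
  have hlow : c i * pairMass π S ≤ shrink (q i) S π * costOn q c π T S := by
    have := pairMass_le_mul_costOn hπ hρ T subset_rfl hT
    rwa [div_mul_eq_mul_div, le_div_iff₀ (hc i), mul_comm] at this
  rw [← mul_div_assoc, le_div_iff₀ hpair]
  nlinarith [mul_le_mul_of_nonneg_left hlow hS.le]

end cost

section potential

lemma one_sub_div_le_log_sub {a b : ℝ} (ha : 0 < a) (hb : 0 < b) :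
    1 - a / b ≤ Real.log b - Real.log a := by
  have := Real.one_sub_inv_le_log_of_pos (div_pos hb ha)
  rwa [inv_div, Real.log_div hb.ne' ha.ne'] at this

lemma le_two_mul_log_sub {x a b : ℝ} (ha : 0 < a) (hb : 0 < b) (hx : x ≤ 2 * (b - a) / b) :
    x ≤ 2 * (Real.log b - Real.log a) := by
  have := one_sub_div_le_log_sub ha hb
  rw [mul_div_assoc, sub_div, div_self hb.ne'] at hx
  linarith

/-- If `2 m ≤ w` the logarithm is at least `4 ln 2 > 2`; otherwise `2 (w - a)/m ≤ 4 (1 - a/w)`. -/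
lemma le_four_mul_log_sub {x a m w : ℝ} (ha : 0 < a) (ham : a ≤ m) (hmw : m ≤ w)
    (hx2 : x ≤ 2) (hx : x ≤ 2 * (w - a) / m) : x ≤ 4 * (Real.log w - Real.log a) := by
  have hm : 0 < m := ha.trans_le ham
  have hw : 0 < w := hm.trans_le hmw
  by_cases hfar : 2 * m ≤ w
  · have h2 : Real.log 2 ≤ Real.log w - Real.log a := by
      rw [← Real.log_div hw.ne' ha.ne']
      exact Real.log_le_log two_pos ((le_div_iff₀ ha).2 (by linarith))
    linarith [Real.log_two_gt_d9]
  · have hclose : 2 * (w - a) / m ≤ 4 * (1 - a / w) := by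
      rw [div_le_iff₀ hm, one_sub_div hw.ne', mul_div_assoc', div_mul_eq_mul_div,
        le_div_iff₀ hw]
      nlinarith
    linarith [one_sub_div_le_log_sub ha hw]

variable {π : H → ℝ}

noncomputable def potential (π : H → ℝ) (μ : ℝ) (S : Finset H) : ℝ :=
  if 1 < S.card then 4 * Real.log (mass π S / μ) + 2 * Real.log (lightMass π S / μ) else 0

lemma potential_of_one_lt {μ : ℝ} (hμ0 : 0 < μ) (hμ : ∀ h, μ ≤ π h) {S : Finset H}
    (hS : 1 < S.card) :
    potential π μ S = 4 * (Real.log (mass π S) - Real.log μ) +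
      2 * (Real.log (lightMass π S) - Real.log μ) := by
  have hπ : ∀ h, 0 ≤ π h := fun h => hμ0.le.trans (hμ h)
  have hm : 0 < lightMass π S := hμ0.trans_le (le_lightMass hπ hμ hS)
  have hw : 0 < mass π S := hm.trans_le (lightMass_le_mass hπ S)
  rw [potential, if_pos hS, Real.log_div hw.ne' hμ0.ne', Real.log_div hm.ne' hμ0.ne']

lemma potential_le_sub [DecidableEq H] {μ x : ℝ} (hμ0 : 0 < μ) (hμ : ∀ h, μ ≤ π h)
    {S S' : Finset H} (hS : 1 < S.card) (hS' : S' ⊆ S) (hx2 : x ≤ 2)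
    (hx : x ≤ 2 * (mass π S - mass π S') / lightMass π S) :
    potential π μ S' ≤ potential π μ S - x := by
  have hπ : ∀ h, 0 ≤ π h := fun h => hμ0.le.trans (hμ h)
  obtain ⟨z, hz, hmax⟩ := exists_max_image S π (card_pos.1 (by omega))
  have hm := le_lightMass hπ hμ hS
  have hmw := lightMass_le_mass hπ S
  have hlog_m : Real.log μ ≤ Real.log (lightMass π S) := Real.log_le_log hμ0 hm
  rw [potential_of_one_lt hμ0 hμ hS]
  by_cases hS'1 : 1 < S'.card
  · rw [potential_of_one_lt hμ0 hμ hS'1]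
    have hm' := le_lightMass hπ hμ hS'1
    have hm'w' := lightMass_le_mass hπ S'
    have hw'w : mass π S' ≤ mass π S := mass_mono hπ hS'
    by_cases hzS' : z ∈ S'
    · -- `S'` keeps the heaviest element, so all the mass it loses is light mass.
      have hlight : mass π S - mass π S' = lightMass π S - lightMass π S' := by
        rw [lightMass, lightMass, maxWeight_eq hz hmax,
          maxWeight_eq hzS' fun h hh => hmax h (hS' hh)]
        ring
      rw [hlight] at hx
      have := le_two_mul_log_sub (by linarith) (by linarith) hx
      have := Real.log_le_log (by linarith) hw'w
      linarith
    · -- `S'` lies in the light part of `S`.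
      have hw'm : mass π S' ≤ lightMass π S := by
        rw [lightMass_eq_mass_erase hz hmax]
        exact mass_mono hπ (subset_erase.2 ⟨hS', hzS'⟩)
      have := le_four_mul_log_sub (by linarith) hw'm hmw hx2 hx
      have := Real.log_le_log (by linarith) (hm'w'.trans hw'm)
      linarith
  · have hμz : 2 ≤ 2 * (mass π S - μ) / lightMass π S := by
      rw [le_div_iff₀ (by linarith), lightMass, maxWeight_eq hz hmax]
      linarith [hμ z]
    have := le_four_mul_log_sub hμ0 hm hmw hx2 (hx2.trans hμz)
    rw [potential, if_neg hS'1]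
    linarith

lemma potential_le_six_mul_log {μ : ℝ} (hμ0 : 0 < μ) (hμ : ∀ h, μ ≤ π h) {S : Finset H}
    (hS : S.Nonempty) : potential π μ S ≤ 6 * Real.log (mass π S / μ) := by
  have hπ : ∀ h, 0 ≤ π h := fun h => hμ0.le.trans (hμ h)
  obtain ⟨y, hy⟩ := hS
  have hμw : μ ≤ mass π S := (hμ y).trans (single_le_mass hπ hy)
  rw [potential]
  split_ifs with hS1
  · have := Real.log_le_log (div_pos (hμ0.trans_le (le_lightMass hπ hμ hS1)) hμ0)
      (div_le_div_of_nonneg_right (lightMass_le_mass hπ S) hμ0.le)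
    linarith
  · exact mul_nonneg (by norm_num) (Real.log_nonneg ((one_le_div hμ0).2 hμw))

end potential

theorem costOn_le_mul_potential_of_isGreedy [Fintype A] [DecidableEq A] [DecidableEq H]
    {π : H → ℝ} {q : Fin m → H → A} {c : Fin m → ℝ} (hc : ∀ i, 0 < c i) {μ : ℝ}
    (hμ0 : 0 < μ) (hμ : ∀ h, μ ≤ π h) (T : QTree m H A) {Tg : QTree m H A} {S : Finset H}
    (hTg : IsGreedy q c π Tg S) (hT : ValidOn q T S) :
    costOn q c π Tg S ≤ costOn q c π T S * potential π μ S := by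
  have hπ : ∀ h, 0 ≤ π h := fun h => hμ0.le.trans (hμ h)
  induction hTg with
  | leaf h => simp [costOn_leaf, potential]
  | node S i ch hcard hmax _ ih =>
    set g := mass π S * shrink (q i) S π / pairMass π S
    have hm : 0 < lightMass π S := hμ0.trans_le (le_lightMass hπ hμ hcard)
    have hw : 0 < mass π S := hm.trans_le (lightMass_le_mass hπ S)
    have hpair : 0 < pairMass π S :=
      (mul_pos hw hm).trans_le (mass_mul_lightMass_le_pairMass hπ S)
    have hroot : c i * mass π S ≤ costOn q c π T S * g :=
      cost_mul_mass_le_of_greedy hπ hc hw hpair hmax T hT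
    have hchild : ∀ j, costOn q c π (ch j) (S.filter fun s => q i s = j) ≤
        costOn q c π T (S.filter fun s => q i s = j) * (potential π μ S - g) := by
      intro j
      rcases (S.filter fun s => q i s = j).eq_empty_or_nonempty with hempty | hne
      · simp [hempty, costOn]
      · refine (ih j hne (hT.mono (filter_subset _ _))).trans
          (mul_le_mul_of_nonneg_left ?_ (costOn_nonneg hπ (fun i => (hc i).le) T _))
        exact potential_le_sub hμ0 hμ hcard (filter_subset _ _) (gain_le_two _ hπ hm)
          (gain_le _ hπ hm j)
    calc costOn q c π (.node i ch) S
        = c i * mass π S + ∑ j, costOn q c π (ch j) (S.filter fun s => q i s = j) :=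
          costOn_node i ch S
      _ ≤ costOn q c π T S * g +
            ∑ j, costOn q c π T (S.filter fun s => q i s = j) * (potential π μ S - g) :=
          add_le_add hroot (sum_le_sum fun j _ => hchild j)
      _ = costOn q c π T S * potential π μ S := by
          rw [← sum_mul, sum_costOn_filter]
          ring

theorem greedy_cost_bound_general [Fintype H] [Nonempty H] [Fintype A] [DecidableEq H] [DecidableEq A]
    (π : H → ℝ) (hπpos : ∀ h, 0 < π h) (hπsum : ∑ h : H, π h = 1)
    (q : Fin m → H → A) (c : Fin m → ℝ) (hc : ∀ i, 0 < c i)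
    (Tg : QTree m H A) (hTg : IsGreedy q c π Tg Finset.univ) :
    ∀ T : QTree m H A, ValidOn q T Finset.univ →
      treeCost q c Tg π ≤
        12 * treeCost q c T π *
          Real.log (1 / Finset.univ.inf' Finset.univ_nonempty π) := by
  intro T hT
  set μ := univ.inf' univ_nonempty π
  have hπ : ∀ h, 0 ≤ π h := fun h => (hπpos h).le
  have hμ : ∀ h, μ ≤ π h := fun h => inf'_le π (mem_univ h)
  have hμ0 : 0 < μ := (lt_inf'_iff _).2 fun h _ => hπpos h
  have hmass : mass π univ = 1 := hπsum
  have hμ1 : μ ≤ 1 :=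
    hmass ▸ (hμ _).trans (single_le_mass hπ (mem_univ (Classical.arbitrary H)))
  have hlog : 0 ≤ Real.log (1 / μ) := Real.log_nonneg ((one_le_div hμ0).2 hμ1)
  have hΦ := potential_le_six_mul_log hμ0 hμ univ_nonempty
  rw [hmass] at hΦ
  rw [treeCost_eq_costOn, treeCost_eq_costOn]
  have hcost : 0 ≤ costOn q c π T univ := costOn_nonneg hπ (fun i => (hc i).le) T univ
  calc costOn q c π Tg univ ≤ costOn q c π T univ * potential π μ univ :=
        costOn_le_mul_potential_of_isGreedy hc hμ0 hμ T hTg hT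
    _ ≤ costOn q c π T univ * (6 * Real.log (1 / μ)) := mul_le_mul_of_nonneg_left hΦ hcost
    _ ≤ 12 * costOn q c π T univ * Real.log (1 / μ) := by nlinarith [mul_nonneg hcost hlog]

/-- The greedy query tree `T^g` for `π` has cost at most
`C(T^g, π) ≤ 12 · C* · ln( 1 / min_{h∈H} π(h) )`, where `C*` is the minimum cost over all
query trees whose leaves are `H` (formalized: the bound holds against every such tree). -/
theorem greedy_cost_bound [Fintype H] [Nonempty H] [Fintype A] [DecidableEq H] [DecidableEq A]
    (π : H → ℝ) (hπpos : ∀ h, 0 < π h) (hπsum : ∑ h : H, π h = 1)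
    (hH : 1 < Fintype.card H)
    (q : Fin m → H → A) (c : Fin m → ℝ) (hc : ∀ i, 0 < c i)
    (hdist : ∀ h h' : H, h ≠ h' → ∃ i : Fin m, q i h ≠ q i h')
    (Tg : QTree m H A) (hTg : IsGreedy q c π Tg Finset.univ) :
    ∀ T : QTree m H A, ValidOn q T Finset.univ →
      treeCost q c Tg π ≤
        12 * treeCost q c T π *
          Real.log (1 / Finset.univ.inf' Finset.univ_nonempty π) :=
  greedy_cost_bound_general π hπpos hπsum q c hc Tg hTg

end ActiveLearning
end
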